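/- arXiv:2009.02390 — 2 statements merged into one kernel-verified Lean document; each statement's English description precedes it below -/
import Mathlib

section
/- Let Y_1, …, Y_T be independent nonnegative random variables, each satisfying E[exp((λ/T)·Y_k)] ≤ exp(λσne/(T − λσe)) for all λ ∈ [0, T/(σe)). Then for any γ ≥ σne, choosing λ = T/(2σe) − nT/(2γ), one obtains Prob((1/T)Σ_{k=1}^T Y_k ≥ γ) ≤ exp(−(σne − γ)² T² / (2[(2T−1)γσe + n(σe)²])). -/
open MeasureTheory ProbabilityTheory Real

/-!
Chernoff's method: for `t ≥ 0`, Markov's inequality applied to `exp (t ∑ Yₖ)` and independence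
bound the tail of the sum by `exp (-t T γ) ∏ₖ E[exp (t Yₖ)]`. With `a = σe`, `m = σne` and the
per-variable bound `E[exp (t Yₖ)] ≤ exp (m t / (1 - a t))`, the paper's choice
`t = (γ - m) / (2aγ)` (that is, `λ = T t`) makes the exponent `-T (γ - m)² / (2a (γ + m))`,
which is at most the stated one because `T (γ + m) ≤ (2T - 1) γ + m` when `T ≥ 1` and `γ ≥ m`.
-/

theorem measureReal_sum_ge_le_of_mgf_le {Ω ι : Type*} [MeasurableSpace Ω] {μ : Measure Ω}
    {X : ι → Ω → ℝ} (h_indep : iIndepFun X μ) (h_meas : ∀ i, Measurable (X i))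
    (s : Finset ι) {t c : ℝ} (ht : 0 ≤ t)
    (h_int : ∀ i ∈ s, Integrable (fun ω => exp (t * X i ω)) μ)
    (h_mgf : ∀ i ∈ s, mgf (X i) μ t ≤ exp c) (ε : ℝ) :
    μ.real {ω | ε ≤ ∑ i ∈ s, X i ω} ≤ exp (-t * ε + s.card * c) := by
  have : IsProbabilityMeasure μ := h_indep.isProbabilityMeasure
  have h_sum_mgf : mgf (∑ i ∈ s, X i) μ t ≤ exp (s.card * c) :=
    calc mgf (∑ i ∈ s, X i) μ t = ∏ i ∈ s, mgf (X i) μ t := h_indep.mgf_sum h_meas s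
      _ ≤ ∏ _i ∈ s, exp c := Finset.prod_le_prod (fun _ _ => mgf_nonneg) h_mgf
      _ = exp (s.card * c) := by rw [Finset.prod_const, ← exp_nat_mul]
  calc μ.real {ω | ε ≤ ∑ i ∈ s, X i ω} = μ.real {ω | ε ≤ (∑ i ∈ s, X i) ω} := by
        simp only [Finset.sum_apply]
    _ ≤ exp (-t * ε) * mgf (∑ i ∈ s, X i) μ t :=
        measure_ge_le_exp_mul_mgf ε ht (h_indep.integrable_exp_mul_sum h_meas h_int)
    _ ≤ exp (-t * ε) * exp (s.card * c) := by gcongr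
    _ = exp (-t * ε + s.card * c) := (exp_add _ _).symm

lemma integrable_exp_mul_and_mgf_le_of_scaled {Ω : Type*} [MeasurableSpace Ω] {μ : Measure Ω}
    {X : Ω → ℝ} {T a m t : ℝ} (hT : 0 < T) (ha : 0 < a) (ht : 0 ≤ t) (hat : a * t < 1)
    (h_int : ∀ l, 0 ≤ l → l < T / a → Integrable (fun ω => exp (l / T * X ω)) μ)
    (h_mgf : ∀ l, 0 ≤ l → l < T / a →
      ∫ ω, exp (l / T * X ω) ∂μ ≤ exp (l * m / (T - l * a))) :
    Integrable (fun ω => exp (t * X ω)) μ ∧ mgf X μ t ≤ exp (m * t / (1 - a * t)) := by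
  have hl : 0 ≤ T * t := by positivity
  have hlT : T * t < T / a := by
    rw [lt_div_iff₀ ha]
    nlinarith
  have h_div : T * t / T = t := by field_simp
  refine ⟨by simpa only [h_div] using h_int _ hl hlT, ?_⟩
  convert h_mgf _ hl hlT using 2
  · rw [h_div, mgf]
  · field_simp

/-- The paper's `λ / T`. -/
noncomputable def chernoffParam (a m γ : ℝ) : ℝ := (γ - m) / (2 * a * γ)

section ChernoffParam

variable {a m γ : ℝ}

lemma chernoffParam_nonneg (ha : 0 < a) (hm : 0 < m) (hmγ : m ≤ γ) :
    0 ≤ chernoffParam a m γ :=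
  have hγ : 0 < γ := hm.trans_le hmγ
  div_nonneg (sub_nonneg.mpr hmγ) (by positivity)

lemma mul_chernoffParam_lt_one (ha : 0 < a) (hm : 0 < m) (hmγ : m ≤ γ) :
    a * chernoffParam a m γ < 1 := by
  have hγ : 0 < γ := hm.trans_le hmγ
  rw [chernoffParam, mul_div_assoc', div_lt_one (by positivity)]
  nlinarith

lemma chernoff_exponent_at_chernoffParam (ha : 0 < a) (hm : 0 < m) (hmγ : m ≤ γ) :
    -chernoffParam a m γ * γ + m * chernoffParam a m γ / (1 - a * chernoffParam a m γ) =
      -(γ - m) ^ 2 / (2 * a * (γ + m)) := by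
  have hγ : 0 < γ := hm.trans_le hmγ
  have h_one_sub : 1 - a * chernoffParam a m γ = (γ + m) / (2 * γ) := by
    rw [chernoffParam]
    field_simp
    ring
  rw [h_one_sub, chernoffParam]
  field_simp
  ring

lemma mul_chernoff_exponent_le {T : ℝ} (ha : 0 < a) (hm : 0 < m) (hmγ : m ≤ γ) (hT : 1 ≤ T) :
    T * (-(γ - m) ^ 2 / (2 * a * (γ + m))) ≤
      -(m - γ) ^ 2 * T ^ 2 / (2 * ((2 * T - 1) * γ * a + m * a)) := by
  have hγ : 0 < γ := hm.trans_le hmγ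
  have h_den : 0 < 2 * ((2 * T - 1) * γ * a + m * a) := by
    have : 0 < (2 * T - 1) * γ * a := mul_pos (mul_pos (by linarith) hγ) ha
    positivity
  rw [mul_div_assoc', div_le_div_iff₀ (by positivity) h_den]
  have h_key : T * (γ + m) ≤ (2 * T - 1) * γ + m := by
    nlinarith [mul_nonneg (sub_nonneg.mpr hT) (sub_nonneg.mpr hmγ)]
  have : 0 ≤ 2 * a * T * (γ - m) ^ 2 * ((2 * T - 1) * γ + m - T * (γ + m)) :=
    mul_nonneg (by positivity) (sub_nonneg.mpr h_key)
  nlinarith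

lemma chernoff_exponent_le {T : ℝ} (ha : 0 < a) (hm : 0 < m) (hmγ : m ≤ γ) (hT : 1 ≤ T) :
    -chernoffParam a m γ * (T * γ) +
        T * (m * chernoffParam a m γ / (1 - a * chernoffParam a m γ)) ≤
      -(m - γ) ^ 2 * T ^ 2 / (2 * ((2 * T - 1) * γ * a + m * a)) := by
  have h_opt := chernoff_exponent_at_chernoffParam ha hm hmγ
  calc -chernoffParam a m γ * (T * γ) +
        T * (m * chernoffParam a m γ / (1 - a * chernoffParam a m γ))
      = T * (-(γ - m) ^ 2 / (2 * a * (γ + m))) := by rw [← h_opt]; ring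
    _ ≤ _ := mul_chernoff_exponent_le ha hm hmγ hT

end ChernoffParam

theorem chernoff_average_tail_general
    {Ω : Type*} [MeasurableSpace Ω] (P : Measure Ω) [IsProbabilityMeasure P]
    (n T : ℕ) (hn : 1 ≤ n) (hT : 1 ≤ T) (σ : ℝ) (hσ : 0 < σ)
    (Y : Fin T → Ω → ℝ)
    (hmeas : ∀ k, Measurable (Y k))
    (hindep : iIndepFun Y P)
    (hint : ∀ (k : Fin T) (l : ℝ), 0 ≤ l → l < T / (σ * Real.exp 1) →
      Integrable (fun ω => Real.exp (l / T * Y k ω)) P)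
    (hmgf : ∀ (k : Fin T) (l : ℝ), 0 ≤ l → l < T / (σ * Real.exp 1) →
      ∫ ω, Real.exp (l / T * Y k ω) ∂P ≤
        Real.exp (l * σ * n * Real.exp 1 / (T - l * σ * Real.exp 1)))
    (γ : ℝ) (hγ : σ * n * Real.exp 1 ≤ γ) :
    P {ω | γ ≤ (1 / T : ℝ) * ∑ k, Y k ω} ≤
      ENNReal.ofReal (Real.exp (-(σ * n * Real.exp 1 - γ) ^ 2 * T ^ 2 /
        (2 * ((2 * T - 1) * γ * (σ * Real.exp 1) + n * (σ * Real.exp 1) ^ 2)))) := by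
  have ha : 0 < σ * exp 1 := by positivity
  have hm : 0 < σ * n * exp 1 := by
    have : (0 : ℝ) < n := by exact_mod_cast hn
    positivity
  have hT_pos : (0 : ℝ) < T := by exact_mod_cast hT
  set t := chernoffParam (σ * exp 1) (σ * n * exp 1) γ
  have ht := chernoffParam_nonneg ha hm hγ
  have h_moment (k : Fin T) :=
    integrable_exp_mul_and_mgf_le_of_scaled (m := σ * n * exp 1) hT_pos ha ht
      (mul_chernoffParam_lt_one ha hm hγ) (hint k) fun l hl hlT => by
        convert hmgf k l hl hlT using 2
        ring
  have h_event : {ω | γ ≤ (1 / T : ℝ) * ∑ k, Y k ω} = {ω | T * γ ≤ ∑ k, Y k ω} := by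
    ext ω
    rw [Set.mem_ofPred_eq, Set.mem_ofPred_eq, one_div, inv_mul_eq_div, le_div_iff₀ hT_pos, mul_comm]
  rw [h_event, ENNReal.le_ofReal_iff_toReal_le (measure_ne_top P _) (exp_pos _).le,
    show (n : ℝ) * (σ * exp 1) ^ 2 = σ * n * exp 1 * (σ * exp 1) by ring]
  calc P.real {ω | T * γ ≤ ∑ k, Y k ω}
      ≤ exp (-t * (T * γ) + T * (σ * n * exp 1 * t / (1 - σ * exp 1 * t))) := by
        simpa only [Finset.card_univ, Fintype.card_fin] using
          measureReal_sum_ge_le_of_mgf_le hindep hmeas Finset.univ ht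
            (fun k _ => (h_moment k).1) (fun k _ => (h_moment k).2) (T * γ)
    _ ≤ _ := exp_le_exp.mpr (chernoff_exponent_le ha hm hγ (by exact_mod_cast hT))

theorem chernoff_average_tail
    {Ω : Type*} [MeasurableSpace Ω] (P : Measure Ω) [IsProbabilityMeasure P]
    (n T : ℕ) (hn : 1 ≤ n) (hT : 1 ≤ T) (σ : ℝ) (hσ : 0 < σ)
    (Y : Fin T → Ω → ℝ) (hpos : ∀ k ω, 0 ≤ Y k ω)
    (hmeas : ∀ k, Measurable (Y k))
    (hindep : iIndepFun Y P)
    (hint : ∀ (k : Fin T) (l : ℝ), 0 ≤ l → l < T / (σ * Real.exp 1) →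
      Integrable (fun ω => Real.exp (l / T * Y k ω)) P)
    (hmgf : ∀ (k : Fin T) (l : ℝ), 0 ≤ l → l < T / (σ * Real.exp 1) →
      ∫ ω, Real.exp (l / T * Y k ω) ∂P ≤
        Real.exp (l * σ * n * Real.exp 1 / (T - l * σ * Real.exp 1)))
    (γ : ℝ) (hγ : σ * n * Real.exp 1 ≤ γ) :
    P {ω | γ ≤ (1 / T : ℝ) * ∑ k, Y k ω} ≤
      ENNReal.ofReal (Real.exp (-(σ * n * Real.exp 1 - γ) ^ 2 * T ^ 2 /
        (2 * ((2 * T - 1) * γ * (σ * Real.exp 1) + n * (σ * Real.exp 1) ^ 2)))) :=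
  chernoff_average_tail_general P n T hn hT σ hσ Y hmeas hindep hint hmgf γ hγ
end

section
/- Let Y be a nonnegative random variable with Prob(Y ≥ η) ≤ 2n·exp(−η²/(2σ²)) for all η ≥ 0, and λ ∈ [0, T/(σe)) a real number, T ≥ 1. Then E[exp((λ/T)·Y)] ≤ 1 + λσne/(T − λσe) ≤ exp(λσne/(T − λσe)). -/
/-!
Integrating the tail bound against `p t^(p-1)` (layer cake) bounds the moments by Gaussian
ones, `E[Y^p] ≤ 2n (√2 σ)^p Γ(p/2 + 1)`, which for integers `m ≥ 1` is at most `n (σe)^m m!`.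
Expanding `exp (c Y)` as a power series and integrating term by term (monotone convergence)
then dominates the moment generating function by `1 + n Σ_{m ≥ 1} (cσe)^m`, a geometric series.
-/

open MeasureTheory ProbabilityTheory Real Set Nat

theorem integral_rpow_sub_one_mul_exp_neg_sq_div {σ p : ℝ} (hσ : 0 < σ) (hp : 0 < p) :
    ∫ t in Ioi (0 : ℝ), t ^ (p - 1) * exp (-t ^ 2 / (2 * σ ^ 2)) =
      (√2 * σ) ^ p * Gamma (p / 2) / 2 := by
  have hb : (0 : ℝ) < (2 * σ ^ 2)⁻¹ := by positivity
  have h2σ : (2 * σ ^ 2)⁻¹ ^ (-(p - 1 + 1) / 2) = (√2 * σ) ^ p := by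
    rw [show -(p - 1 + 1) / 2 = -(p / 2) by ring, rpow_neg hb.le, inv_rpow (by positivity),
      inv_inv, show 2 * σ ^ 2 = (√2 * σ) ^ (2 : ℝ) by
        rw [rpow_two, mul_pow, sq_sqrt zero_le_two], ← rpow_mul (by positivity)]
    ring_nf
  calc ∫ t in Ioi (0 : ℝ), t ^ (p - 1) * exp (-t ^ 2 / (2 * σ ^ 2))
      = ∫ t in Ioi (0 : ℝ), t ^ (p - 1) * exp (-(2 * σ ^ 2)⁻¹ * t ^ (2 : ℝ)) := by
        refine setIntegral_congr_fun measurableSet_Ioi fun t _ => ?_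
        rw [rpow_two, neg_div, div_eq_inv_mul, neg_mul]
    _ = (√2 * σ) ^ p * Gamma (p / 2) / 2 := by
        rw [integral_rpow_mul_exp_neg_mul_rpow two_pos (by linarith) hb, h2σ, sub_add_cancel]
        ring

theorem two_mul_sqrt_two_pow_mul_Gamma_le {m : ℕ} (hm : 1 ≤ m) :
    2 * √2 ^ m * Gamma (m / 2 + 1) ≤ exp 1 ^ m * m ! := by
  obtain rfl | hm2 : m = 1 ∨ 2 ≤ m := by omega
  -- `Γ (3/2) = √π / 2` is needed here: `Γ (3/2) ≤ 1` alone would give `2√2 > e`.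
  · have hπ : 2 * π ≤ exp 1 ^ 2 := by
      nlinarith [pi_lt_d2, exp_one_gt_d9]
    rw [Nat.cast_one, Gamma_add_one (by norm_num), Gamma_one_half_eq, pow_one, pow_one,
      factorial_one, Nat.cast_one, mul_one]
    calc 2 * √2 * (1 / 2 * √π) = √(2 * π) := by rw [sqrt_mul zero_le_two]; ring
      _ ≤ exp 1 := (sqrt_le_left (exp_pos 1).le).2 hπ
  · have hGamma : Gamma (m / 2 + 1) ≤ m ! := by
      rw [← Gamma_nat_eq_factorial]
      have hm2' : (2 : ℝ) ≤ m := by exact_mod_cast hm2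
      exact Gamma_strictMonoOn_Ici.monotoneOn (mem_Ici.2 (by linarith))
        (mem_Ici.2 (by linarith)) (by linarith)
    have hpow : 2 * √2 ^ m ≤ exp 1 ^ m :=
      calc 2 * √2 ^ m ≤ √2 ^ m * √2 ^ m := by
            gcongr
            calc (2 : ℝ) = √2 ^ 2 := (sq_sqrt zero_le_two).symm
              _ ≤ √2 ^ m := pow_le_pow_right₀ (one_le_sqrt.2 one_le_two) hm2
        _ = 2 ^ m := by rw [← mul_pow, mul_self_sqrt zero_le_two]
        _ ≤ exp 1 ^ m := by gcongr; linarith [exp_one_gt_d9]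
    exact mul_le_mul hpow hGamma (Gamma_pos_of_pos (by positivity)).le (by positivity)

section Moments

variable {Ω : Type*} [MeasurableSpace Ω] {μ : Measure Ω} {Y : Ω → ℝ}

theorem lintegral_rpow_le_of_gaussian_tail {C σ p : ℝ} (hC : 0 ≤ C) (hσ : 0 < σ) (hp : 0 < p)
    (hY : AEMeasurable Y μ) (hY0 : 0 ≤ᵐ[μ] Y)
    (htail : ∀ t, 0 < t → μ {ω | t ≤ Y ω} ≤ ENNReal.ofReal (C * exp (-t ^ 2 / (2 * σ ^ 2)))) :
    ∫⁻ ω, ENNReal.ofReal (Y ω ^ p) ∂μ ≤ ENNReal.ofReal (C * (√2 * σ) ^ p * Gamma (p / 2 + 1)) := by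
  set g : ℝ → ℝ := fun t => t ^ (p - 1) * exp (-t ^ 2 / (2 * σ ^ 2))
  have hg : IntegrableOn g (Ioi 0) := by
    convert integrableOn_rpow_mul_exp_neg_mul_sq (b := (2 * σ ^ 2)⁻¹) (by positivity)
      (show -1 < p - 1 by linarith) using 4
    ring
  have hCg : 0 ≤ᵐ[volume.restrict (Ioi 0)] fun t => C * g t := by
    refine (ae_restrict_iff' measurableSet_Ioi).2 (ae_of_all _ fun t ht => ?_)
    have := rpow_nonneg (le_of_lt ht) (p - 1)
    positivity
  rw [lintegral_rpow_eq_lintegral_meas_le_mul μ hY0 hY hp]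
  calc ENNReal.ofReal p * ∫⁻ t in Ioi 0, μ {ω | t ≤ Y ω} * ENNReal.ofReal (t ^ (p - 1))
      ≤ ENNReal.ofReal p * ∫⁻ t in Ioi 0, ENNReal.ofReal (C * g t) := by
        refine mul_le_mul_right (setLIntegral_mono' measurableSet_Ioi fun t ht => ?_) _
        rw [show C * g t = C * exp (-t ^ 2 / (2 * σ ^ 2)) * t ^ (p - 1) by ring,
          ENNReal.ofReal_mul (by positivity)]
        exact mul_le_mul_left (htail t ht) _
    _ = ENNReal.ofReal (p * ∫ t in Ioi 0, C * g t) := by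
        rw [ENNReal.ofReal_mul hp.le, ofReal_integral_eq_lintegral_ofReal (hg.const_mul C) hCg]
    _ = ENNReal.ofReal (C * (√2 * σ) ^ p * Gamma (p / 2 + 1)) := by
        rw [integral_const_mul, integral_rpow_sub_one_mul_exp_neg_sq_div hσ hp,
          Gamma_add_one (by positivity)]
        ring_nf

theorem lintegral_pow_le_of_gaussian_tail {A σ : ℝ} (hA : 0 ≤ A) (hσ : 0 < σ)
    (hY : AEMeasurable Y μ) (hY0 : 0 ≤ᵐ[μ] Y)
    (htail : ∀ t, 0 < t → μ {ω | t ≤ Y ω} ≤ ENNReal.ofReal (2 * A * exp (-t ^ 2 / (2 * σ ^ 2))))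
    {m : ℕ} (hm : 1 ≤ m) :
    ∫⁻ ω, ENNReal.ofReal (Y ω ^ m) ∂μ ≤ ENNReal.ofReal (A * (σ * exp 1) ^ m * m !) := by
  have h := lintegral_rpow_le_of_gaussian_tail (by positivity) hσ (by positivity) hY hY0
    htail (p := m)
  simp only [rpow_natCast] at h
  refine h.trans (ENNReal.ofReal_le_ofReal ?_)
  calc 2 * A * (√2 * σ) ^ m * Gamma (m / 2 + 1)
      = A * σ ^ m * (2 * √2 ^ m * Gamma (m / 2 + 1)) := by ring
    _ ≤ A * σ ^ m * (exp 1 ^ m * m !) :=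
        mul_le_mul_of_nonneg_left (two_mul_sqrt_two_pow_mul_Gamma_le hm) (by positivity)
    _ = A * (σ * exp 1) ^ m * m ! := by ring

theorem lintegral_exp_mul_eq_tsum {c : ℝ} (hc : 0 ≤ c) (hY : AEMeasurable Y μ)
    (hY0 : 0 ≤ᵐ[μ] Y) :
    ∫⁻ ω, ENNReal.ofReal (exp (c * Y ω)) ∂μ =
      ∑' m : ℕ, ENNReal.ofReal (c ^ m / m !) * ∫⁻ ω, ENNReal.ofReal (Y ω ^ m) ∂μ := by
  calc ∫⁻ ω, ENNReal.ofReal (exp (c * Y ω)) ∂μ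
      = ∫⁻ ω, ∑' m : ℕ, ENNReal.ofReal (c ^ m / m !) * ENNReal.ofReal (Y ω ^ m) ∂μ := by
        refine lintegral_congr_ae (hY0.mono fun ω hω => ?_)
        have hcY : 0 ≤ c * Y ω := mul_nonneg hc hω
        dsimp only
        rw [exp_eq_exp_ℝ, (NormedSpace.expSeries_div_hasSum_exp (c * Y ω)).tsum_eq.symm,
          ENNReal.ofReal_tsum_of_nonneg (fun m => by positivity)
            (Real.summable_pow_div_factorial _)]
        refine tsum_congr fun m => ?_
        rw [← ENNReal.ofReal_mul (by positivity), mul_pow, div_mul_eq_mul_div]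
    _ = ∑' m : ℕ, ENNReal.ofReal (c ^ m / m !) * ∫⁻ ω, ENNReal.ofReal (Y ω ^ m) ∂μ := by
        rw [lintegral_tsum fun m => ((hY.pow_const m).ennreal_ofReal.const_mul _)]
        exact tsum_congr fun m => lintegral_const_mul' _ _ ENNReal.ofReal_ne_top

theorem hasSum_mul_pow_succ_geometric {A q : ℝ} (hq0 : 0 ≤ q) (hq1 : q < 1) :
    HasSum (fun m : ℕ => A * q ^ (m + 1)) (A * q / (1 - q)) := by
  simpa [pow_succ, mul_assoc, mul_comm, mul_left_comm, div_eq_mul_inv] using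
    (hasSum_geometric_of_lt_one hq0 hq1).mul_left (A * q)

theorem lintegral_exp_mul_le_of_lintegral_pow_le [IsProbabilityMeasure μ] {c K A : ℝ}
    (hc : 0 ≤ c) (hK : 0 ≤ K) (hA : 0 ≤ A) (hcK : c * K < 1)
    (hY : AEMeasurable Y μ) (hY0 : 0 ≤ᵐ[μ] Y)
    (hmom : ∀ m : ℕ, 1 ≤ m → ∫⁻ ω, ENNReal.ofReal (Y ω ^ m) ∂μ ≤ ENNReal.ofReal (A * K ^ m * m !)) :
    ∫⁻ ω, ENNReal.ofReal (exp (c * Y ω)) ∂μ ≤ ENNReal.ofReal (1 + A * (c * K) / (1 - c * K)) := by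
  have hterm : ∀ m : ℕ, ENNReal.ofReal (c ^ (m + 1) / (m + 1) !) *
      ∫⁻ ω, ENNReal.ofReal (Y ω ^ (m + 1)) ∂μ ≤ ENNReal.ofReal (A * (c * K) ^ (m + 1)) := by
    intro m
    calc _ ≤ ENNReal.ofReal (c ^ (m + 1) / (m + 1) !) *
          ENNReal.ofReal (A * K ^ (m + 1) * (m + 1) !) := by gcongr; exact hmom _ (by omega)
      _ = ENNReal.ofReal (A * (c * K) ^ (m + 1)) := by
        rw [← ENNReal.ofReal_mul (by positivity)]
        congr 1
        field_simp
        ring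
  have hgeom := hasSum_mul_pow_succ_geometric (A := A) (mul_nonneg hc hK) hcK
  rw [lintegral_exp_mul_eq_tsum hc hY hY0, tsum_eq_zero_add' ENNReal.summable,
    ENNReal.ofReal_add zero_le_one (hgeom.nonneg fun m => by positivity), ← hgeom.tsum_eq,
    ENNReal.ofReal_tsum_of_nonneg (fun m => by positivity) hgeom.summable]
  gcongr
  · simp
  · exact hterm _
end Moments

theorem mgf_bound_of_subgaussian_tail_general
    {Ω : Type*} [MeasurableSpace Ω] (P : Measure Ω) [IsProbabilityMeasure P]
    (n : ℕ) (σ : ℝ) (hσ : 0 < σ) (T : ℝ)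
    (Y : Ω → ℝ) (hYmeas : Measurable Y) (hYpos : ∀ ω, 0 ≤ Y ω)
    (htail : ∀ η : ℝ, 0 ≤ η →
      P {ω | η ≤ Y ω} ≤ ENNReal.ofReal (2 * n * Real.exp (-η ^ 2 / (2 * σ ^ 2))))
    (l : ℝ) (hl : 0 ≤ l) (hl' : l < T / (σ * Real.exp 1)) :
    ∫ ω, Real.exp (l / T * Y ω) ∂P ≤ 1 + l * σ * n * Real.exp 1 / (T - l * σ * Real.exp 1)
      ∧ 1 + l * σ * n * Real.exp 1 / (T - l * σ * Real.exp 1) ≤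
        Real.exp (l * σ * n * Real.exp 1 / (T - l * σ * Real.exp 1)) := by
  have hσe : 0 < σ * exp 1 := by positivity
  have hT : 0 < T := (div_pos_iff_of_pos_right hσe).1 (hl.trans_lt hl')
  have hgap : l * σ * exp 1 < T := by rw [mul_assoc]; exact (lt_div_iff₀ hσe).1 hl'
  have hq : l / T * (σ * exp 1) < 1 := by
    rwa [div_mul_eq_mul_div, div_lt_one hT, ← mul_assoc]
  have hY0 : 0 ≤ᵐ[P] Y := ae_of_all _ hYpos
  have hmgf := lintegral_exp_mul_le_of_lintegral_pow_le (div_nonneg hl hT.le) hσe.le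
    n.cast_nonneg hq hYmeas.aemeasurable hY0 fun m hm =>
      lintegral_pow_le_of_gaussian_tail n.cast_nonneg hσ hYmeas.aemeasurable hY0
        (fun t ht => htail t ht.le) hm
  have hR : (n : ℝ) * (l / T * (σ * exp 1)) / (1 - l / T * (σ * exp 1)) =
      l * σ * n * exp 1 / (T - l * σ * exp 1) := by
    field_simp
  rw [hR] at hmgf
  refine ⟨?_, by linarith [add_one_le_exp (l * σ * n * exp 1 / (T - l * σ * exp 1))]⟩
  rw [integral_eq_lintegral_of_nonneg_ae (ae_of_all _ fun ω => (exp_pos _).le)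
    (hYmeas.const_mul _).exp.aestronglyMeasurable]
  exact ENNReal.toReal_le_of_le_ofReal (add_nonneg zero_le_one
    (div_nonneg (by positivity) (sub_pos.2 hgap).le)) hmgf

theorem mgf_bound_of_subgaussian_tail
    {Ω : Type*} [MeasurableSpace Ω] (P : Measure Ω) [IsProbabilityMeasure P]
    (n : ℕ) (hn : 1 ≤ n) (σ : ℝ) (hσ : 0 < σ) (T : ℝ) (hT : 1 ≤ T)
    (Y : Ω → ℝ) (hYmeas : Measurable Y) (hYpos : ∀ ω, 0 ≤ Y ω)
    (htail : ∀ η : ℝ, 0 ≤ η →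
      P {ω | η ≤ Y ω} ≤ ENNReal.ofReal (2 * n * Real.exp (-η ^ 2 / (2 * σ ^ 2))))
    (l : ℝ) (hl : 0 ≤ l) (hl' : l < T / (σ * Real.exp 1)) :
    ∫ ω, Real.exp (l / T * Y ω) ∂P ≤ 1 + l * σ * n * Real.exp 1 / (T - l * σ * Real.exp 1)
      ∧ 1 + l * σ * n * Real.exp 1 / (T - l * σ * Real.exp 1) ≤
        Real.exp (l * σ * n * Real.exp 1 / (T - l * σ * Real.exp 1)) :=
  mgf_bound_of_subgaussian_tail_general P n σ hσ T Y hYmeas hYpos htail l hl hl'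
end
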